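/- Let G be a closed subgroup of SL(2,ℝ) that is not compact, and let L be a finite non-empty subset of the real projective line ℙ¹(ℝ) such that M·L = L for every M ∈ G. Then L has at most 2 elements. -/

import Mathlib

/-!
An element of `SL(2,ℝ)` fixing three distinct points of `ℙ¹(ℝ)` has three pairwise independent
eigenvectors in `ℝ²`; writing the third as a combination of the first two forces all eigenvalues
to agree, so the element is a scalar matrix, i.e. lies in the finite centre `{±1}`. If `L` had
three distinct points `a, b, c`, then `M ↦ (M·a, M·b, M·c)` would map `G` into the finite set `L³`
whose fibres lie in cosets of the centre, so `G` would be finite, hence compact.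
-/

open MeasureTheory Filter

noncomputable section

/-- The group `SL(2,ℝ)`. -/
abbrev SL2 := Matrix.SpecialLinearGroup (Fin 2) ℝ

instance : TopologicalSpace SL2 := instTopologicalSpaceSubtype

/-- The real projective line `ℙ¹(ℝ)`, the projectivization of `ℝ² \ {0}`. -/
abbrev P1 := Projectivization ℝ (EuclideanSpace ℝ (Fin 2))

lemma sl2_inj (M : SL2) :
    Function.Injective (Matrix.toEuclideanCLM (𝕜 := ℝ) (M : Matrix (Fin 2) (Fin 2) ℝ)) := by
  intro x y h
  have h2 := congrArg (fun v => Matrix.toEuclideanCLM (𝕜 := ℝ)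
    ((M⁻¹ : SL2) : Matrix (Fin 2) (Fin 2) ℝ) v) h
  simpa [← ContinuousLinearMap.comp_apply, ← ContinuousLinearMap.mul_def, ← map_mul,
    Matrix.SpecialLinearGroup.coe_inv, Matrix.adjugate_mul, M.prop, one_smul] using h2

/-- The induced action of `M ∈ SL(2,ℝ)` on the real projective line. -/
def projAct (M : SL2) (x : P1) : P1 :=
  Projectivization.map
    ((Matrix.toEuclideanCLM (𝕜 := ℝ) (M : Matrix (Fin 2) (Fin 2) ℝ)) : _ →ₗ[ℝ] _)
    (sl2_inj M) x

open scoped LinearAlgebra.Projectivization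

section

variable {K V : Type*} [Field K] [AddCommGroup V] [Module K V]

theorem LinearIndependent.eigenvalues_eq_of_apply_add {f : V →ₗ[K] V} {u v : V}
    (huv : LinearIndependent K ![u, v]) {α β γ s t : K} (hs : s ≠ 0) (ht : t ≠ 0)
    (hu : f u = α • u) (hv : f v = β • v) (hw : f (s • u + t • v) = γ • (s • u + t • v)) :
    α = γ ∧ β = γ := by
  have hzero : (s * (α - γ)) • u + (t * (β - γ)) • v = 0 := by
    rw [map_add, map_smul, map_smul, hu, hv] at hw
    linear_combination (norm := module) hw
  obtain ⟨hαγ, hβγ⟩ := LinearIndependent.pair_iff.1 huv _ _ hzero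
  exact ⟨sub_eq_zero.1 ((mul_eq_zero.1 hαγ).resolve_left hs),
    sub_eq_zero.1 ((mul_eq_zero.1 hβγ).resolve_left ht)⟩

namespace Projectivization

theorem map_eq_self_iff {f : V →ₗ[K] V} (hf : Function.Injective f) (x : ℙ K V) :
    x.map f hf = x ↔ ∃ α : K, f x.rep = α • x.rep := by
  conv_lhs => rw [← x.mk_rep, map_mk, mk_eq_mk_iff']
  exact exists_congr fun α => eq_comm

theorem exists_eq_smul_id_of_map_eq_self (hV : Module.finrank K V = 2) {f : V →ₗ[K] V}
    (hf : Function.Injective f) {a b c : ℙ K V} (hab : a ≠ b) (hac : a ≠ c) (hbc : b ≠ c)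
    (ha : a.map f hf = a) (hb : b.map f hf = b) (hc : c.map f hf = c) :
    ∃ α : K, f = α • LinearMap.id := by
  obtain ⟨α, hα⟩ := (map_eq_self_iff hf a).1 ha
  obtain ⟨β, hβ⟩ := (map_eq_self_iff hf b).1 hb
  obtain ⟨γ, hγ⟩ := (map_eq_self_iff hf c).1 hc
  have hli : LinearIndependent K ![a.rep, b.rep] := linearIndependent_pair_iff_ne.2 hab
  have hspan : Submodule.span K (Set.range ![a.rep, b.rep]) = ⊤ :=
    hli.span_eq_top_of_card_eq_finrank (by simp [hV])
  obtain ⟨coeff, hcoeff⟩ :=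
    (Submodule.mem_span_range_iff_exists_fun K).1 (hspan ▸ Submodule.mem_top : c.rep ∈ _)
  simp only [Fin.sum_univ_two, Matrix.cons_val_zero, Matrix.cons_val_one] at hcoeff
  have not_multiple {x y : ℙ K V} (hxy : x ≠ y) (r : K) : r • x.rep ≠ y.rep :=
    (LinearIndependent.pair_iff' x.rep_nonzero).1 (linearIndependent_pair_iff_ne.2 hxy) r
  have hs : coeff 0 ≠ 0 := by
    intro h0
    exact not_multiple hbc (coeff 1) (by simpa [h0] using hcoeff)
  have ht : coeff 1 ≠ 0 := by
    intro h1
    exact not_multiple hac (coeff 0) (by simpa [h1] using hcoeff)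
  obtain ⟨hαγ, hβγ⟩ := hli.eigenvalues_eq_of_apply_add hs ht hα hβ (hcoeff ▸ hγ)
  refine ⟨α, LinearMap.ext_on_range hspan fun i => ?_⟩
  fin_cases i
  · simpa using hα
  · simpa [hαγ, hβγ] using hβ

end Projectivization

end

theorem Matrix.SpecialLinearGroup.finite_center {n R : Type*} [Fintype n] [DecidableEq n]
    [CommRing R] [IsDomain R] :
    (Subgroup.center (SpecialLinearGroup n R) : Set (SpecialLinearGroup n R)).Finite := by
  have : NeZero (max (Fintype.card n) 1) := ⟨(lt_max_of_lt_right zero_lt_one).ne'⟩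
  exact Set.finite_coe_iff.1 (center_equiv_rootsOfUnity.toEquiv.finite_iff.2 inferInstance)

lemma projAct_one (x : P1) : projAct 1 x = x := by
  induction x using Projectivization.ind with
  | h v hv => simp [projAct, Projectivization.map_mk]

lemma projAct_mul (M N : SL2) (x : P1) : projAct (M * N) x = projAct M (projAct N x) := by
  induction x using Projectivization.ind with
  | h v hv => simp [projAct, Projectivization.map_mk, map_mul]

lemma projAct_inv_mul_eq_self {M N : SL2} {x : P1} (h : projAct M x = projAct N x) :
    projAct (M⁻¹ * N) x = x := by
  rw [projAct_mul, ← h, ← projAct_mul, inv_mul_cancel, projAct_one]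

theorem mem_center_of_projAct_eq_self {M : SL2} {a b c : P1} (hab : a ≠ b) (hac : a ≠ c)
    (hbc : b ≠ c) (ha : projAct M a = a) (hb : projAct M b = b) (hc : projAct M c = c) :
    M ∈ Subgroup.center SL2 := by
  obtain ⟨α, hα⟩ := Projectivization.exists_eq_smul_id_of_map_eq_self finrank_euclideanSpace_fin
    (sl2_inj M) hab hac hbc ha hb hc
  have hM : (M : Matrix (Fin 2) (Fin 2) ℝ) = Matrix.scalar (Fin 2) α := by
    apply Matrix.toEuclideanLin.injective
    rw [← Matrix.coe_toEuclideanCLM_eq_toEuclideanLin, hα]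
    ext v i
    simp
  refine Matrix.SpecialLinearGroup.mem_center_iff.2 ⟨α, ?_, hM.symm⟩
  simpa [hM] using M.prop

theorem finite_preimage_projAct_three {a b c : P1} (hab : a ≠ b) (hac : a ≠ c) (hbc : b ≠ c)
    (p : P1 × P1 × P1) :
    ((fun M : SL2 => (projAct M a, projAct M b, projAct M c)) ⁻¹' {p}).Finite := by
  set φ := fun M : SL2 => (projAct M a, projAct M b, projAct M c)
  rcases (φ ⁻¹' {p}).eq_empty_or_nonempty with hempty | ⟨N, hN⟩
  · simp [hempty]
  refine (Matrix.SpecialLinearGroup.finite_center.image (N * ·)).subset fun M hM => ?_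
  have hMN : φ M = φ N := hM.trans hN.symm
  simp only [φ, Prod.mk.injEq] at hMN
  obtain ⟨hMa, hMb, hMc⟩ := hMN
  exact ⟨N⁻¹ * M, mem_center_of_projAct_eq_self hab hac hbc (projAct_inv_mul_eq_self hMa.symm)
    (projAct_inv_mul_eq_self hMb.symm) (projAct_inv_mul_eq_self hMc.symm), mul_inv_cancel_left N M⟩

theorem invariant_set_card_le_two_general
    (G : Subgroup SL2)
    (hnc : ¬ IsCompact (G : Set SL2))
    (L : Set P1) (hfin : L.Finite)
    (hinv : ∀ M ∈ G, projAct M '' L = L) :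
    L.ncard ≤ 2 := by
  by_contra! h
  obtain ⟨a, ha, b, hb, c, hc, hab, hac, hbc⟩ := (Set.two_lt_ncard hfin).1 h
  have hmaps : ∀ M ∈ G, ∀ x ∈ L, projAct M x ∈ L := fun M hM x hx =>
    hinv M hM ▸ Set.mem_image_of_mem _ hx
  have hGfin : (G : Set SL2).Finite :=
    ((hfin.prod (hfin.prod hfin)).preimage' fun p _ =>
      finite_preimage_projAct_three hab hac hbc p).subset
        fun M hM => ⟨hmaps M hM a ha, hmaps M hM b hb, hmaps M hM c hc⟩
  exact hnc hGfin.isCompact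

/-- A finite non-empty subset of `ℙ¹(ℝ)` invariant under a non-compact closed subgroup of
`SL(2,ℝ)` has at most two elements. -/
theorem invariant_set_card_le_two
    (G : Subgroup SL2)
    (hclosed : IsClosed (G : Set SL2))
    (hnc : ¬ IsCompact (G : Set SL2))
    (L : Set P1) (hfin : L.Finite) (hne : L.Nonempty)
    (hinv : ∀ M ∈ G, projAct M '' L = L) :
    L.ncard ≤ 2 :=
  invariant_set_card_le_two_general G hnc L hfin hinv
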